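/- For λ, t > 0, the function x ↦ (3/(λ^3 t^3 x^4))·(6 - (6 + 6λtx + 3λ^2 t^2 x^2 + λ^3 t^3 x^3)·e^{-λ t x}) on (0,∞) integrates to 1, i.e. it is a probability density on (0,∞). -/

import Mathlib

/-!
Substituting `y = λ t x`, the density becomes `3 γ(4, y) / y⁴` with `γ(4, ·)` the lower
incomplete gamma function. Since `γ(4, ·)' = y³ e^{-y}`, the function `-e^{-y} - γ(4, y) / y³`
is a primitive of it; it tends to `-1` at `0⁺` (as `γ(4, y) ≤ y⁴ / 4`) and to `0` at infinity.
-/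

open MeasureTheory Real Filter Set Topology

lemma monotoneOn_Ici_of_hasDerivAt_nonneg {f f' : ℝ → ℝ} {a : ℝ}
    (hf : ∀ x, HasDerivAt f (f' x) x) (hf' : ∀ x, a < x → 0 ≤ f' x) : MonotoneOn f (Ici a) :=
  monotoneOn_of_hasDerivWithinAt_nonneg (convex_Ici a)
    (fun x _ => (hf x).continuousAt.continuousWithinAt)
    (fun x _ => (hf x).hasDerivWithinAt)
    (fun x hx => hf' x (by rwa [interior_Ici] at hx))

namespace StitLength

/-- The lower incomplete gamma function `γ(4, y) = ∫₀^y s³ e^{-s} ds`. -/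
noncomputable def lowerGammaFour (y : ℝ) : ℝ :=
  6 - (6 + 6 * y + 3 * y ^ 2 + y ^ 3) * exp (-y)

noncomputable def density (y : ℝ) : ℝ := 3 / y ^ 4 * lowerGammaFour y

noncomputable def densityPrimitive (y : ℝ) : ℝ := -exp (-y) - lowerGammaFour y / y ^ 3

lemma lowerGammaFour_zero : lowerGammaFour 0 = 0 := by simp [lowerGammaFour]

lemma hasDerivAt_lowerGammaFour (y : ℝ) : HasDerivAt lowerGammaFour (y ^ 3 * exp (-y)) y := by
  have hpoly : HasDerivAt (fun y : ℝ => 6 + 6 * y + 3 * y ^ 2 + y ^ 3) (6 + 6 * y + 3 * y ^ 2) y := by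
    refine (((((hasDerivAt_id y).const_mul 6).const_add 6).add
      ((hasDerivAt_pow 2 y).const_mul 3)).add (hasDerivAt_pow 3 y)).congr_deriv ?_
    push_cast; ring
  exact ((hpoly.mul (hasDerivAt_neg y).exp).const_sub 6).congr_deriv (by ring)

lemma lowerGammaFour_nonneg {y : ℝ} (hy : 0 ≤ y) : 0 ≤ lowerGammaFour y := by
  have hmono : MonotoneOn lowerGammaFour (Ici 0) :=
    monotoneOn_Ici_of_hasDerivAt_nonneg hasDerivAt_lowerGammaFour
      (fun x _ => by positivity)
  simpa [lowerGammaFour_zero] using hmono self_mem_Ici hy hy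

lemma lowerGammaFour_le {y : ℝ} (hy : 0 ≤ y) : lowerGammaFour y ≤ y ^ 4 / 4 := by
  have hmono : MonotoneOn (fun y => y ^ 4 / 4 - lowerGammaFour y) (Ici 0) := by
    refine monotoneOn_Ici_of_hasDerivAt_nonneg
      (fun x => (((hasDerivAt_pow 4 x).div_const 4).sub (hasDerivAt_lowerGammaFour x)))
      (fun x hx => ?_)
    have hexp : exp (-x) ≤ 1 := exp_le_one_iff.2 (by linarith)
    have hcube : 0 ≤ x ^ 3 := by positivity
    push_cast
    nlinarith
  simpa [lowerGammaFour_zero] using hmono self_mem_Ici hy hy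

lemma tendsto_lowerGammaFour_atTop : Tendsto lowerGammaFour atTop (𝓝 6) := by
  have h k := tendsto_pow_mul_exp_neg_atTop_nhds_zero k
  have hpoly : Tendsto (fun y : ℝ => (6 + 6 * y + 3 * y ^ 2 + y ^ 3) * exp (-y)) atTop (𝓝 0) := by
    convert (((h 0).const_mul 6).add ((h 1).const_mul 6)).add ((h 2).const_mul 3) |>.add (h 3)
      using 1
    · ext y; ring
    · simp
  rw [← sub_zero 6]
  exact hpoly.const_sub 6

lemma hasDerivAt_densityPrimitive {y : ℝ} (hy : y ≠ 0) :
    HasDerivAt densityPrimitive (density y) y := by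
  refine ((hasDerivAt_neg y).exp.neg.sub ((hasDerivAt_lowerGammaFour y).div (hasDerivAt_pow 3 y)
    (pow_ne_zero 3 hy))).congr_deriv ?_
  rw [density]
  field_simp
  ring

lemma tendsto_div_cube_lowerGammaFour_nhdsGT_zero :
    Tendsto (fun y => lowerGammaFour y / y ^ 3) (𝓝[>] 0) (𝓝 0) := by
  have hlin : Tendsto (fun y : ℝ => y / 4) (𝓝[>] 0) (𝓝 0) :=
    ((continuous_id.div_const 4).tendsto' 0 0 (zero_div 4)).mono_left nhdsWithin_le_nhds
  refine squeeze_zero' ?_ ?_ hlin <;> filter_upwards [self_mem_nhdsWithin] with y (hy : 0 < y)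
  · exact div_nonneg (lowerGammaFour_nonneg hy.le) (by positivity)
  · rw [div_le_iff₀ (by positivity)]
    calc lowerGammaFour y ≤ y ^ 4 / 4 := lowerGammaFour_le hy.le
      _ = y / 4 * y ^ 3 := by ring

lemma tendsto_densityPrimitive_nhdsGT_zero :
    Tendsto densityPrimitive (𝓝[>] 0) (𝓝 (-1)) := by
  have hexp : Tendsto (fun y : ℝ => exp (-y)) (𝓝[>] 0) (𝓝 1) := by
    simpa using ((continuous_neg.rexp).tendsto 0).mono_left nhdsWithin_le_nhds
  unfold densityPrimitive
  simpa using hexp.neg.sub tendsto_div_cube_lowerGammaFour_nhdsGT_zero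

lemma tendsto_densityPrimitive_atTop : Tendsto densityPrimitive atTop (𝓝 0) := by
  have hexp : Tendsto (fun y : ℝ => exp (-y)) atTop (𝓝 0) :=
    tendsto_exp_atBot.comp tendsto_neg_atTop_atBot
  have hcube : Tendsto (fun y : ℝ => (y ^ 3)⁻¹) atTop (𝓝 0) :=
    tendsto_inv_atTop_zero.comp (tendsto_pow_atTop three_ne_zero)
  unfold densityPrimitive
  simpa [div_eq_mul_inv] using hexp.neg.sub (tendsto_lowerGammaFour_atTop.mul hcube)

lemma integral_density : ∫ y in Ioi 0, density y = 1 := by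
  -- `densityPrimitive 0 = -1` because `lowerGammaFour 0 / 0 = 0`.
  have hcont : ContinuousWithinAt densityPrimitive (Ici 0) 0 := by
    rw [← continuousWithinAt_Ioi_iff_Ici, ContinuousWithinAt]
    simpa [densityPrimitive, lowerGammaFour_zero] using tendsto_densityPrimitive_nhdsGT_zero
  rw [integral_Ioi_of_hasDerivAt_of_nonneg hcont
    (fun y (hy : 0 < y) => hasDerivAt_densityPrimitive hy.ne')
    (fun y (hy : 0 < y) => mul_nonneg (by positivity) (lowerGammaFour_nonneg hy.le))
    tendsto_densityPrimitive_atTop]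
  simp [densityPrimitive, lowerGammaFour_zero]

lemma integral_mul_density_mul {a : ℝ} (ha : 0 < a) :
    ∫ x in Ioi 0, a * density (a * x) = 1 := by
  rw [integral_const_mul, integral_comp_mul_left_Ioi density 0 ha, mul_zero, integral_density,
    smul_eq_mul, mul_one, mul_inv_cancel₀ ha.ne']

end StitLength

open StitLength in
theorem stit_length_density_integrates_to_one (l t : ℝ) (hl : 0 < l) (ht : 0 < t) :
    ∫ x in Set.Ioi (0:ℝ),
      (3 / (l ^ 3 * t ^ 3 * x ^ 4)) *
        (6 - (6 + 6 * l * t * x + 3 * l ^ 2 * t ^ 2 * x ^ 2 + l ^ 3 * t ^ 3 * x ^ 3) *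
          Real.exp (-(l * t * x))) = 1 := by
  have hlt : 0 < l * t := mul_pos hl ht
  rw [← integral_mul_density_mul hlt]
  congr 1 with x
  simp only [density, lowerGammaFour]
  rcases eq_or_ne x 0 with rfl | hx
  · simp
  · field_simp
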